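/- For $n \geq 2$, $R > 0$, $\beta > 0$ and a smooth radially decreasing positive function $f$ on $\mathbb{R}^n$, if $f(R) \geq \frac{n-1}{n}\bar f(R)$, then the stability inequality $\left(f(R)-\frac{n-1-R\beta}{n}\bar f(R)\right)\left(f(R)-\bar f(R)\right)+\frac{1+\beta R}{n\beta}f_r(R)\bar f(R) \leq 0$ holds. -/

import Mathlib

open MeasureTheory Metric

/-- For `n ≥ 2`, `R > 0`, `β > 0` and a smooth radially decreasing positive function
`f(x) = g(|x|)`, if `f(R) ≥ ((n-1)/n) f̄(R)` then the stability inequality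
`(f(R) - ((n-1-Rβ)/n) f̄(R))(f(R) - f̄(R)) + ((1+βR)/(nβ)) f_r(R) f̄(R) ≤ 0` holds,
where `f̄(R)` is the average of `f` over the ball `B_R`. -/
theorem stmt_3 (n : ℕ) (hn : 2 ≤ n) (R β : ℝ) (hR : 0 < R) (hβ : 0 < β)
    (g : ℝ → ℝ) (hg : ContDiff ℝ (⊤ : ℕ∞) g) (hgpos : ∀ r, 0 < g r)
    (hdec : AntitoneOn g (Set.Ici 0))
    (fbar : ℝ)
    (hfbar : fbar = (∫ x in ball (0 : EuclideanSpace ℝ (Fin n)) R, g ‖x‖)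
        / (volume (ball (0 : EuclideanSpace ℝ (Fin n)) R)).toReal)
    (hcond : ((n : ℝ) - 1) / n * fbar ≤ g R) :
    (g R - (((n : ℝ) - 1 - R * β) / n) * fbar) * (g R - fbar)
      + ((1 + β * R) / (n * β)) * deriv g R * fbar ≤ 0 := by
  have hn0 : (0:ℝ) < n := by positivity
  -- volume of the ball is positive and finite
  set B := ball (0 : EuclideanSpace ℝ (Fin n)) R
  have hvol_pos : 0 < (volume B).toReal := by
    have h1 : 0 < volume B := measure_ball_pos _ _ hR
    have h2 : volume B < ⊤ := measure_ball_lt_top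
    exact ENNReal.toReal_pos h1.ne' h2.ne
  -- g R ≤ fbar
  have hint : IntegrableOn (fun x : EuclideanSpace ℝ (Fin n) => g ‖x‖) B volume := by
    exact ((hg.continuous.comp continuous_norm).continuousOn.integrableOn_compact
      (isCompact_closedBall (0 : EuclideanSpace ℝ (Fin n)) R)).mono_set ball_subset_closedBall
  have hle : g R * (volume B).toReal ≤ ∫ x in B, g ‖x‖ := by
    apply setIntegral_ge_of_const_le_real measurableSet_ball measure_ball_lt_top.ne _ hint
    intro x hx
    have hx' : ‖x‖ < R := by simpa [B, dist_eq_norm] using hx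
    exact hdec (norm_nonneg x) hR.le hx'.le
  have hgF : g R ≤ fbar := by
    rw [hfbar, le_div_iff₀ hvol_pos]
    exact hle
  have hFpos : 0 < fbar := lt_of_lt_of_le (hgpos R) hgF
  -- deriv g R ≤ 0
  have hderiv : deriv g R ≤ 0 := by
    have hd : HasDerivAt g (deriv g R) R :=
      (hg.differentiable (by simp) R).hasDerivAt
    have htend : Filter.Tendsto (slope g R) (nhdsWithin R (Set.Ioi R)) (nhds (deriv g R)) :=
      ((hasDerivAt_iff_tendsto_slope.mp hd).mono_left
        (nhdsWithin_mono _ (by intro x hx; exact ne_of_gt hx)))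
    refine le_of_tendsto htend ?_
    filter_upwards [self_mem_nhdsWithin] with x hx
    have hx' : R < x := hx
    have hgle : g x ≤ g R := hdec hR.le (le_of_lt (hR.trans hx')) hx'.le
    have : slope g R x = (g x - g R) / (x - R) := by
      simp [slope, vsub_eq_sub, div_eq_inv_mul]
    rw [this]
    apply div_nonpos_of_nonpos_of_nonneg (by linarith) (by linarith)
  -- algebra
  have h2 : g R - fbar ≤ 0 := by linarith
  have h1 : 0 ≤ g R - (((n : ℝ) - 1 - R * β) / n) * fbar := by
    have key : (((n : ℝ) - 1 - R * β) / n) * fbar ≤ ((n : ℝ) - 1) / n * fbar := by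
      exact mul_le_mul_of_nonneg_right
        ((div_le_div_iff_of_pos_right hn0).mpr (by nlinarith [mul_pos hR hβ])) hFpos.le
    linarith
  have hc : (0:ℝ) ≤ (1 + β * R) / (n * β) := by positivity
  have t1 : (g R - (((n : ℝ) - 1 - R * β) / n) * fbar) * (g R - fbar) ≤ 0 :=
    mul_nonpos_of_nonneg_of_nonpos h1 h2
  have t2 : ((1 + β * R) / (n * β)) * deriv g R * fbar ≤ 0 :=
    mul_nonpos_of_nonpos_of_nonneg (mul_nonpos_of_nonneg_of_nonpos hc hderiv) hFpos.le
  linarith
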